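/- There exists a constant c > 0, independent of r, such that for all reals r > 0: c/(r+1)² ≤ E(2,r) ≤ 1/√(r+1). -/

import Mathlib

open MeasureTheory Real Set Filter

noncomputable section

/-- `kappa m` is the volume `κ_m = π^{m/2}/Γ(m/2+1)` of the `m`-dimensional unit ball. -/
def kappa (m : ℕ) : ℝ := Real.pi ^ ((m : ℝ) / 2) / Real.Gamma ((m : ℝ) / 2 + 1)

/-- `omegaC m` is the surface area `ω_m = 2π^{m/2}/Γ(m/2)` of the unit sphere `S^{m-1}`. -/
def omegaC (m : ℕ) : ℝ := 2 * Real.pi ^ ((m : ℝ) / 2) / Real.Gamma ((m : ℝ) / 2)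

/-- `bn2 n = ω_{n-1} ω_n / (4π)`. -/
def bn2 (n : ℕ) : ℝ := omegaC (n - 1) * omegaC n / (4 * Real.pi)

/-- The `j`-th standard basis vector of `ℝ^m` (or `0` if `j ≥ m`). -/
def eVec (m j : ℕ) : EuclideanSpace ℝ (Fin m) :=
  if h : j < m then EuclideanSpace.single ⟨j, h⟩ (1 : ℝ) else 0

/-- `cC m s = c(m,s) = ∫_{S^{m-1}} ⟨e,u⟩₊^s dH^{m-1}(u)` for the fixed unit vector `e = e₁`. -/
def cC (m : ℕ) (s : ℝ) : ℝ :=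
  ∫ u in Metric.sphere (0 : EuclideanSpace ℝ (Fin m)) 1,
    max ((inner ℝ (eVec m 0) u : ℝ)) 0 ^ s ∂(μH[(m : ℝ) - 1])

/-- `c2 s = c(2,s) = ∫_{-π/2}^{π/2} (cos θ)^s dθ`. -/
def c2 (s : ℝ) : ℝ := ∫ θ in (-(Real.pi / 2))..(Real.pi / 2), Real.cos θ ^ s

/-- The hyperplane `H(u,t) = {x ∈ ℝⁿ : ⟨x,u⟩ = t}`. -/
def hyp (n : ℕ) (u : EuclideanSpace ℝ (Fin n)) (t : ℝ) : Set (EuclideanSpace ℝ (Fin n)) :=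
  {x | (inner ℝ x u : ℝ) = t}

/-- `innerInt n r K = ∫_{S^{n-1}} ∫_0^∞ 1{H(u,t) ∩ K ≠ ∅} t^{r-1} dt dH^{n-1}(u)`. -/
def innerInt (n : ℕ) (r : ℝ) (K : Set (EuclideanSpace ℝ (Fin n))) : ℝ :=
  ∫ u in Metric.sphere (0 : EuclideanSpace ℝ (Fin n)) 1,
    (∫ t in Set.Ioi (0 : ℝ),
      Set.indicator {t : ℝ | (hyp n u t ∩ K).Nonempty} (fun t => t ^ (r - 1)) t)
    ∂(μH[(n : ℝ) - 1])

/-- `momentI n k r γ = I_k(n,r,γ)`, the `k`-th moment of the volume of the zero cell. -/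
def momentI (n k : ℕ) (r γ : ℝ) : ℝ :=
  ∫ x : Fin k → EuclideanSpace ℝ (Fin n),
    Real.exp (-(2 * γ / ((n : ℝ) * kappa n)) *
      innerInt n r (convexHull ℝ (insert 0 (Set.range x))))

/-- `VarF n r γ = Var(n,r,γ) = I_2 - I_1²`, the variance of the volume of the zero cell. -/
def VarF (n : ℕ) (r γ : ℝ) : ℝ := momentI n 2 r γ - (momentI n 1 r γ) ^ 2

/-- `alphaF t φ = α(t,φ) = arctan((t - cos φ)/ sin φ)`. -/
def alphaF (t φ : ℝ) : ℝ := Real.arctan ((t - Real.cos φ) / Real.sin φ)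

/-- The auxiliary function `F_r(t,φ)`. -/
def Fr (r t φ : ℝ) : ℝ :=
  (1 / c2 r) * (t ^ r * (∫ θ in (-(Real.pi / 2))..(alphaF t φ), Real.cos θ ^ r)
    + ∫ θ in (alphaF t φ - φ)..(Real.pi / 2), Real.cos θ ^ r)

/-- The planar line `L(θ,t) = {x ∈ ℝ² : x₁ cos θ + x₂ sin θ = t}`. -/
def lineL (θ t : ℝ) : Set (ℝ × ℝ) := {x | x.1 * Real.cos θ + x.2 * Real.sin θ = t}

/-- `planarInt r K = ∫_0^{2π} ∫_0^∞ 1{L(θ,t) ∩ K ≠ ∅} t^{r-1} dt dθ`. -/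
def planarInt (r : ℝ) (K : Set (ℝ × ℝ)) : ℝ :=
  ∫ θ in (0 : ℝ)..(2 * Real.pi),
    ∫ t in Set.Ioi (0 : ℝ),
      Set.indicator {t : ℝ | (lineL θ t ∩ K).Nonempty} (fun t => t ^ (r - 1)) t

/-- The auxiliary quantity `D(n,r,γ)`. -/
def Dconst (n : ℕ) (r γ : ℝ) : ℝ :=
  (n : ℝ) * kappa n ^ 2 / r * Real.Gamma (2 * (n : ℝ) / r + 1) *
    ((n : ℝ) * kappa n * r / (4 * γ * cC n r)) ^ (2 * (n : ℝ) / r)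

/-- The auxiliary quantity `E(n,r)`. -/
def Econst (n : ℕ) (r : ℝ) : ℝ :=
  ((n : ℝ) / c2 ((n : ℝ) - 2)) *
    ∫ φ in (0 : ℝ)..Real.pi, (Real.sin φ) ^ (n - 2) *
      ∫ t in (0 : ℝ)..1, t ^ (n - 1) * (1 + t ^ r - Fr r t φ)

/-- `Mfun v r = M(v,r) = (1/c(2,r)) ∫_v^{π/2} (cos θ)^r dθ`. -/
def Mfun (v r : ℝ) : ℝ := (1 / c2 r) * ∫ θ in v..(Real.pi / 2), Real.cos θ ^ r

/-- `Aconst r = A(r) = π^{(r+1)/2}/(e Γ((r+1)/2))`. -/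
def Aconst (r : ℝ) : ℝ := Real.pi ^ ((r + 1) / 2) / (Real.exp 1 * Real.Gamma ((r + 1) / 2))

/-- `Bconst a = B(a) = 2πe(a+1)^{(a+1)/a}/a`. -/
def Bconst (a : ℝ) : ℝ := 2 * Real.pi * Real.exp 1 * (a + 1) ^ ((a + 1) / a) / a

/-- The intensity `γ̂(a,n)` normalizing the expected volume of the zero cell to `1/λ`. -/
def gammaHat (a lam : ℝ) (n : ℕ) : ℝ :=
  a * (n : ℝ) ^ 2 * kappa n / (2 * cC n (a * n)) *
    (lam * Real.Gamma (1 / a + 1) * kappa n) ^ a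

/-- The embedding of `ℝ²` onto `span{e₁,e₂} ⊆ ℝⁿ`. -/
def emb (n : ℕ) (q : ℝ × ℝ) : EuclideanSpace ℝ (Fin n) :=
  q.1 • eVec n 0 + q.2 • eVec n 1

/-- `para2 n x y = ∇₂(x,y)`, the area of the parallelogram spanned by `x` and `y`. -/
def para2 (n : ℕ) (x y : EuclideanSpace ℝ (Fin n)) : ℝ :=
  Real.sqrt (‖x‖ ^ 2 * ‖y‖ ^ 2 - (inner ℝ x y : ℝ) ^ 2)

end

/-! With `M(v) := Mfun v r`, the reflection `M(v) + M(-v) = 1` rewrites the integrand as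
`1 + t^r - F_r(t,φ) = M(φ - α) + t^r M(α)`, and for `φ ∈ (0,π)`, `t ∈ [0,1]` the angle
`α = α(t,φ)` lies in `[φ - π/2, φ/2]`. As `M` decreases on `[-π/2, π/2]`, the inner integral
over `t` lies between `M(φ/2)/(r+2)` and `M(φ/2)/2 + M(φ - π/2)/(r+2)`. Integrating over `φ`
(by parts for `M(φ/2)`, by the reflection for `M(φ - π/2)`) bounds `E(2,r)` through
`T = ∫_0^{π/2} θ cos^r θ dθ`, which lies in `[1/(r+1), π/(2(r+1))]` because
`2θ/π ≤ sin θ ≤ θ`, and through `c(2,r) ∈ [2/√(r+1), π]`. The lower bound on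
`c(2,r) = ∫_0^π sin^r` follows from Wallis' identity `(n+1) I_n I_{n+1} = 2π` for
`I_n = ∫_0^π sin^n`, at `n = ⌈r⌉`. -/

open intervalIntegral

section CosPowerIntegrals

variable {r : ℝ}

lemma continuous_cos_rpow (hr : 0 ≤ r) : Continuous fun θ => cos θ ^ r := by
  fun_prop (disch := assumption)

lemma c2_eq_integral_sin_rpow (r : ℝ) : c2 r = ∫ x in 0..π, sin x ^ r := by
  simp_rw [← cos_sub_pi_div_two]
  rw [integral_comp_sub_right (fun x => cos x ^ r)]
  norm_num [c2, sub_half]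

lemma c2_le_c2 {s : ℝ} (hr : 0 ≤ r) (hrs : r ≤ s) : c2 s ≤ c2 r := by
  rw [c2_eq_integral_sin_rpow, c2_eq_integral_sin_rpow]
  refine integral_mono_on pi_pos.le ?_ ?_ fun x hx =>
    rpow_le_rpow_of_exponent_ge' (sin_nonneg_of_mem_Icc hx) (sin_le_one x) hr hrs
  all_goals exact Continuous.intervalIntegrable (by fun_prop (disch := linarith)) _ _

lemma c2_le_pi (hr : 0 ≤ r) : c2 r ≤ π := by
  simpa [c2_eq_integral_sin_rpow] using c2_le_c2 le_rfl hr

lemma c2_natCast (n : ℕ) : c2 n = ∫ x in 0..π, sin x ^ n := by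
  simp [c2_eq_integral_sin_rpow]

lemma integral_sin_pow_mul_integral_sin_pow_succ (n : ℕ) :
    (n + 1) * ((∫ x in 0..π, sin x ^ n) * ∫ x in 0..π, sin x ^ (n + 1)) = 2 * π := by
  induction n with
  | zero => norm_num [mul_comm]
  | succ n ih =>
    rw [integral_sin_pow (n := n)]
    simp only [sin_zero, sin_pi, ne_eq, add_eq_zero, one_ne_zero, and_false, not_false_eq_true,
      zero_pow, zero_mul, sub_self, zero_div, zero_add]
    push_cast
    field_simp
    linear_combination ((n : ℝ) + 2) * ih

lemma two_pi_div_le_sq_integral_sin_pow (n : ℕ) :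
    2 * π / (n + 1) ≤ (∫ x in 0..π, sin x ^ n) ^ 2 := by
  rw [div_le_iff₀ (by positivity), ← integral_sin_pow_mul_integral_sin_pow_succ n]
  have := integral_sin_pow_pos n
  calc _ ≤ ((n : ℝ) + 1) * ((∫ x in 0..π, sin x ^ n) * ∫ x in 0..π, sin x ^ n) := by
        gcongr; exact integral_sin_pow_succ_le n
    _ = _ := by ring

lemma two_div_sqrt_le_c2 (hr : 0 ≤ r) : 2 / √(r + 1) ≤ c2 r := by
  rcases le_or_gt r 1 with hr1 | hr1
  · calc 2 / √(r + 1) ≤ 2 := div_le_self zero_le_two (one_le_sqrt.mpr (by linarith))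
      _ = c2 1 := by norm_num [c2_eq_integral_sin_rpow]
      _ ≤ c2 r := c2_le_c2 hr hr1
  · set n := ⌈r⌉₊
    have hrn : r ≤ n := Nat.le_ceil r
    have hnr : (n : ℝ) < r + 1 := Nat.ceil_lt_add_one hr
    have hc2n : 0 ≤ c2 n := by rw [c2_natCast]; exact (integral_sin_pow_pos n).le
    -- `n + 1 < r + 2`, and `4 (r + 2) ≤ 2π (r + 1)` for `r ≥ 1` because `π > 3`
    have hsq : 4 / (r + 1) ≤ c2 n ^ 2 := by
      refine le_trans ?_ (c2_natCast n ▸ two_pi_div_le_sq_integral_sin_pow n)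
      rw [div_le_div_iff₀ (by linarith) (by positivity)]
      nlinarith [pi_gt_three]
    calc 2 / √(r + 1) = √(4 / (r + 1)) := by
          rw [sqrt_div' _ (by linarith), show (4 : ℝ) = 2 ^ 2 by norm_num, sqrt_sq zero_le_two]
      _ ≤ c2 n := sqrt_le_iff.mpr ⟨hc2n, hsq⟩
      _ ≤ c2 r := c2_le_c2 hr hrn

lemma c2_pos (hr : 0 ≤ r) : 0 < c2 r :=
  lt_of_lt_of_le (by positivity) (two_div_sqrt_le_c2 hr)

lemma integral_sin_mul_cos_rpow (hr : 0 ≤ r) :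
    ∫ θ in 0..π / 2, sin θ * cos θ ^ r = 1 / (r + 1) := by
  have hderiv : ∀ θ ∈ uIcc 0 (π / 2),
      HasDerivAt (fun θ => -cos θ ^ (r + 1) / (r + 1)) (sin θ * cos θ ^ r) θ := by
    intro θ _
    have h := ((hasDerivAt_rpow_const (p := r + 1) (Or.inr (by linarith))).comp θ
      (hasDerivAt_cos θ)).neg.div_const (r + 1)
    rw [add_sub_cancel_right] at h
    exact h.congr_deriv (by field_simp)
  rw [integral_eq_sub_of_hasDerivAt hderiv
    (Continuous.intervalIntegrable (by fun_prop (disch := assumption)) _ _)]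
  simp [zero_rpow (by linarith : r + 1 ≠ 0), neg_div]

lemma one_div_add_one_le_integral_mul_cos_rpow (hr : 0 ≤ r) :
    1 / (r + 1) ≤ ∫ θ in 0..π / 2, θ * cos θ ^ r := by
  rw [← integral_sin_mul_cos_rpow hr]
  refine integral_mono_on (by positivity) ?_ ?_ fun θ hθ =>
    mul_le_mul_of_nonneg_right (sin_le hθ.1) (rpow_nonneg (cos_nonneg_of_mem_Icc
      ⟨by linarith [hθ.1, pi_pos], hθ.2⟩) r)
  all_goals exact Continuous.intervalIntegrable (by fun_prop (disch := assumption)) _ _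

lemma integral_mul_cos_rpow_le (hr : 0 ≤ r) :
    ∫ θ in 0..π / 2, θ * cos θ ^ r ≤ π / 2 / (r + 1) := by
  rw [div_eq_mul_one_div (π / 2), ← integral_sin_mul_cos_rpow hr,
    ← intervalIntegral.integral_const_mul]
  refine integral_mono_on (by positivity) ?_ ?_ fun θ hθ => ?_
  · exact Continuous.intervalIntegrable (by fun_prop (disch := assumption)) _ _
  · exact Continuous.intervalIntegrable (by fun_prop (disch := assumption)) _ _
  have hsin : θ ≤ π / 2 * sin θ := by
    have := mul_le_sin hθ.1 hθ.2
    rw [div_mul_eq_mul_div, div_le_iff₀ pi_pos] at this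
    linarith
  rw [← mul_assoc]
  exact mul_le_mul_of_nonneg_right hsin
    (rpow_nonneg (cos_nonneg_of_mem_Icc ⟨by linarith [hθ.1, pi_pos], hθ.2⟩) r)

end CosPowerIntegrals

section Mfun

variable {r : ℝ}

lemma intervalIntegrable_cos_rpow (hr : 0 ≤ r) (a b : ℝ) :
    IntervalIntegrable (fun θ => cos θ ^ r) volume a b :=
  (continuous_cos_rpow hr).intervalIntegrable a b

lemma hasDerivAt_Mfun (hr : 0 ≤ r) (v : ℝ) :
    HasDerivAt (fun v => Mfun v r) (1 / c2 r * -cos v ^ r) v :=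
  (integral_hasDerivAt_left (intervalIntegrable_cos_rpow hr _ _)
    ((continuous_cos_rpow hr).stronglyMeasurableAtFilter _ _)
    (continuous_cos_rpow hr).continuousAt).const_mul _

lemma continuous_Mfun (hr : 0 ≤ r) : Continuous fun v => Mfun v r :=
  continuous_iff_continuousAt.mpr fun v => (hasDerivAt_Mfun hr v).continuousAt

lemma Mfun_pi_div_two : Mfun (π / 2) r = 0 := by
  simp [Mfun]

lemma Mfun_add_Mfun_neg (hr : 0 ≤ r) (v : ℝ) : Mfun v r + Mfun (-v) r = 1 := by
  have hreflect : ∫ θ in -v..π / 2, cos θ ^ r = ∫ θ in -(π / 2)..v, cos θ ^ r := by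
    simpa using (integral_comp_neg (a := -v) (b := π / 2) fun θ => cos θ ^ r)
  have hsplit := integral_add_adjacent_intervals (a := -(π / 2)) (b := v) (c := π / 2)
    (intervalIntegrable_cos_rpow hr _ _) (intervalIntegrable_cos_rpow hr _ _)
  rw [Mfun, Mfun, hreflect, ← mul_add, add_comm, hsplit, ← c2, one_div_mul_cancel (c2_pos hr).ne']

lemma Mfun_antitoneOn (hr : 0 ≤ r) : AntitoneOn (fun v => Mfun v r) (Icc (-(π / 2)) (π / 2)) := by
  intro a ha b hb hab
  have hsplit := integral_add_adjacent_intervals (a := a) (b := b) (c := π / 2)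
    (intervalIntegrable_cos_rpow hr _ _) (intervalIntegrable_cos_rpow hr _ _)
  have hmid : 0 ≤ ∫ θ in a..b, cos θ ^ r := integral_nonneg hab fun θ hθ =>
    rpow_nonneg (cos_nonneg_of_mem_Icc ⟨ha.1.trans hθ.1, hθ.2.trans hb.2⟩) r
  simp only [Mfun]
  rw [← hsplit]
  have := c2_pos hr
  gcongr
  linarith

lemma Mfun_nonneg (hr : 0 ≤ r) {v : ℝ} (hv : v ∈ Icc (-(π / 2)) (π / 2)) : 0 ≤ Mfun v r :=
  Mfun_pi_div_two (r := r) ▸ Mfun_antitoneOn hr hv ⟨by linarith [pi_pos], le_rfl⟩ hv.2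

end Mfun

section RadialIntegral

variable {r : ℝ}

lemma one_add_rpow_sub_Fr (hr : 0 ≤ r) (t φ : ℝ) :
    1 + t ^ r - Fr r t φ = Mfun (φ - alphaF t φ) r + t ^ r * Mfun (alphaF t φ) r := by
  have h₁ := Mfun_add_Mfun_neg hr (alphaF t φ)
  have h₂ := Mfun_add_Mfun_neg hr (φ - alphaF t φ)
  have hreflect :
      ∫ θ in -(π / 2)..alphaF t φ, cos θ ^ r = ∫ θ in -alphaF t φ..π / 2, cos θ ^ r := by
    simpa using (integral_comp_neg (a := -alphaF t φ) (b := π / 2) fun θ => cos θ ^ r).symm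
  rw [neg_sub] at h₂
  rw [Fr, hreflect, mul_add, ← mul_assoc, mul_comm (1 / c2 r) (t ^ r), mul_assoc]
  simp only [Mfun] at h₁ h₂ ⊢
  linear_combination (-(t ^ r)) * h₁ - h₂

lemma alphaF_mem_Icc {t φ : ℝ} (ht : t ∈ Icc 0 1) (hφ : φ ∈ Ioo 0 π) :
    alphaF t φ ∈ Icc (φ - π / 2) (φ / 2) := by
  obtain ⟨hφ₀, hφπ⟩ := hφ
  have hsin : 0 < sin φ := sin_pos_of_pos_of_lt_pi hφ₀ hφπ
  constructor
  · have htan : tan (φ - π / 2) = (0 - cos φ) / sin φ := by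
      rw [tan_eq_sin_div_cos, sin_sub_pi_div_two, cos_sub_pi_div_two, zero_sub]
    rw [alphaF, ← arctan_tan (x := φ - π / 2) (by linarith) (by linarith), htan]
    gcongr
    exact ht.1
  · have htan : tan (φ / 2) = (1 - cos φ) / sin φ := by
      have hc : 0 < cos (φ / 2) := cos_pos_of_mem_Ioo ⟨by linarith, by linarith⟩
      have hsin₂ : sin φ = 2 * sin (φ / 2) * cos (φ / 2) := by rw [← sin_two_mul]; ring_nf
      have hcos₂ : cos φ = 2 * cos (φ / 2) ^ 2 - 1 := by rw [← cos_two_mul]; ring_nf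
      rw [tan_eq_sin_div_cos, div_eq_div_iff hc.ne' hsin.ne', hsin₂, hcos₂]
      linear_combination (2 * cos (φ / 2)) * sin_sq_add_cos_sq (φ / 2)
    rw [alphaF, ← arctan_tan (x := φ / 2) (by linarith) (by linarith), htan]
    gcongr
    exact ht.2

lemma continuous_radialIntegrand (hr : 0 ≤ r) (φ : ℝ) :
    Continuous fun t => t * (1 + t ^ r - Fr r t φ) := by
  have hM := continuous_Mfun hr
  simp_rw [one_add_rpow_sub_Fr hr, alphaF]
  fun_prop (disch := assumption)

lemma measurable_radialIntegrand (hr : 0 ≤ r) :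
    Measurable fun p : ℝ × ℝ => p.2 * (1 + p.2 ^ r - Fr r p.2 p.1) := by
  have hM := (continuous_Mfun hr).measurable
  simp_rw [one_add_rpow_sub_Fr hr, alphaF]
  fun_prop

lemma radialIntegrand_mem_Icc (hr : 0 ≤ r) {t φ : ℝ} (ht : t ∈ Icc 0 1) (hφ : φ ∈ Ioo 0 π) :
    t * (1 + t ^ r - Fr r t φ) ∈
      Icc (t * t ^ r * Mfun (φ / 2) r) (t * Mfun (φ / 2) r + t * t ^ r * Mfun (φ - π / 2) r) := by
  obtain ⟨hα₁, hα₂⟩ := alphaF_mem_Icc ht hφ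
  have hα₀ := neg_pi_div_two_lt_arctan ((t - cos φ) / sin φ)
  have hαπ := arctan_lt_pi_div_two ((t - cos φ) / sin φ)
  rw [← alphaF] at hα₀ hαπ
  have hφ₁ : φ / 2 ∈ Icc (-(π / 2)) (π / 2) := ⟨by linarith [hφ.1], by linarith [hφ.2]⟩
  have hφ₂ : φ - π / 2 ∈ Icc (-(π / 2)) (π / 2) := ⟨by linarith [hφ.1], by linarith [hφ.2]⟩
  have hφα : φ - alphaF t φ ∈ Icc (-(π / 2)) (π / 2) := ⟨by linarith [hφ.1], by linarith⟩
  have hα : alphaF t φ ∈ Icc (-(π / 2)) (π / 2) := ⟨hα₀.le, hαπ.le⟩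
  have htr : 0 ≤ t * t ^ r := mul_nonneg ht.1 (rpow_nonneg ht.1 r)
  rw [one_add_rpow_sub_Fr hr, mul_add, ← mul_assoc]
  constructor
  · have h₁ := mul_nonneg ht.1 (Mfun_nonneg hr hφα)
    have h₂ := mul_le_mul_of_nonneg_left (Mfun_antitoneOn hr hα hφ₁ hα₂) htr
    linarith
  · have h₁ := mul_le_mul_of_nonneg_left (Mfun_antitoneOn hr hφ₁ hφα (by linarith)) ht.1
    have h₂ := mul_le_mul_of_nonneg_left (Mfun_antitoneOn hr hφ₂ hα hα₁) htr
    linarith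

lemma integral_mul_rpow (hr : 0 ≤ r) : ∫ t in (0 : ℝ)..1, t * t ^ r = 1 / (r + 2) := by
  have hpow : ∫ t in (0 : ℝ)..1, t * t ^ r = ∫ t in (0 : ℝ)..1, t ^ (r + 1) := by
    refine integral_congr fun t ht => ?_
    rw [uIcc_of_le zero_le_one] at ht
    simp only [rpow_add_one' ht.1 (by linarith), mul_comm]
  rw [hpow, integral_rpow (Or.inl (by linarith)), one_rpow, zero_rpow (by linarith)]
  ring

noncomputable def radialIntegral (r φ : ℝ) : ℝ := ∫ t in (0 : ℝ)..1, t * (1 + t ^ r - Fr r t φ)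

lemma radialIntegral_mem_Icc (hr : 0 ≤ r) {φ : ℝ} (hφ : φ ∈ Ioo 0 π) :
    radialIntegral r φ ∈
      Icc (Mfun (φ / 2) r / (r + 2)) (Mfun (φ / 2) r / 2 + Mfun (φ - π / 2) r / (r + 2)) := by
  have hpow := integral_mul_rpow hr
  have hcont : Continuous fun t : ℝ => t * t ^ r := by fun_prop (disch := assumption)
  have hJ := (continuous_radialIntegrand hr φ).intervalIntegrable (μ := volume) 0 1
  constructor
  · calc Mfun (φ / 2) r / (r + 2) = ∫ t in (0 : ℝ)..1, t * t ^ r * Mfun (φ / 2) r := by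
          rw [intervalIntegral.integral_mul_const, hpow]; ring
      _ ≤ radialIntegral r φ :=
          integral_mono_on zero_le_one ((hcont.mul continuous_const).intervalIntegrable _ _) hJ
            fun t ht => (radialIntegrand_mem_Icc hr ht hφ).1
  · calc radialIntegral r φ
        ≤ ∫ t in (0 : ℝ)..1, (t * Mfun (φ / 2) r + t * t ^ r * Mfun (φ - π / 2) r) :=
          integral_mono_on zero_le_one hJ (Continuous.intervalIntegrable (by fun_prop) _ _)
            fun t ht => (radialIntegrand_mem_Icc hr ht hφ).2
      _ = _ := by
          rw [integral_add (Continuous.intervalIntegrable (by fun_prop) _ _)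
            (Continuous.intervalIntegrable (by fun_prop (disch := assumption)) _ _),
            intervalIntegral.integral_mul_const, intervalIntegral.integral_mul_const, integral_id,
            hpow]
          ring

lemma intervalIntegrable_radialIntegral (hr : 0 ≤ r) :
    IntervalIntegrable (radialIntegral r) volume 0 π := by
  have hmeas : StronglyMeasurable (radialIntegral r) := by
    have hIoc : radialIntegral r = fun φ => ∫ t in Ioc (0 : ℝ) 1, t * (1 + t ^ r - Fr r t φ) :=
      funext fun φ => integral_of_le zero_le_one
    rw [hIoc]
    exact (measurable_radialIntegrand hr).stronglyMeasurable.integral_prod_right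
  have hbound : Continuous fun φ => Mfun (φ / 2) r / 2 + Mfun (φ - π / 2) r / (r + 2) := by
    have hM := continuous_Mfun hr
    fun_prop
  rw [intervalIntegrable_iff_integrableOn_Ioo_of_le pi_pos.le]
  refine Integrable.mono' (hbound.integrableOn_Icc.mono_set Ioo_subset_Icc_self)
    hmeas.aestronglyMeasurable ((ae_restrict_mem measurableSet_Ioo).mono fun φ hφ => ?_)
  obtain ⟨hlower, hupper⟩ := radialIntegral_mem_Icc hr hφ
  have : 0 ≤ Mfun (φ / 2) r / (r + 2) :=
    div_nonneg (Mfun_nonneg hr ⟨by linarith [hφ.1, pi_pos], by linarith [hφ.2]⟩) (by linarith)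
  rw [norm_of_nonneg (this.trans hlower)]
  exact hupper

end RadialIntegral

section AngularIntegral

variable {r : ℝ}

lemma integral_Mfun_half (hr : 0 ≤ r) :
    ∫ φ in 0..π, Mfun (φ / 2) r = 2 / c2 r * ∫ θ in 0..π / 2, θ * cos θ ^ r := by
  have hparts := integral_mul_deriv_eq_deriv_mul (a := 0) (b := π / 2)
    (fun v _ => hasDerivAt_Mfun hr v) (fun v _ => hasDerivAt_id v)
    (Continuous.intervalIntegrable (by fun_prop (disch := assumption)) _ _)
    intervalIntegrable_const
  simp only [mul_one, Mfun_pi_div_two, id, zero_mul, mul_zero, sub_zero, zero_sub] at hparts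
  have hintegrand (θ : ℝ) : 1 / c2 r * -cos θ ^ r * θ = -(1 / c2 r * (θ * cos θ ^ r)) := by ring
  rw [integral_comp_div (fun v => Mfun v r) two_ne_zero, zero_div, hparts, smul_eq_mul]
  simp only [hintegrand, intervalIntegral.integral_neg, intervalIntegral.integral_const_mul]
  ring

lemma integral_Mfun_sub_pi_div_two (hr : 0 ≤ r) : ∫ φ in 0..π, Mfun (φ - π / 2) r = π / 2 := by
  have hM := continuous_Mfun hr
  rw [integral_comp_sub_right (fun v => Mfun v r), zero_sub, sub_half]
  have hsym : ∫ v in -(π / 2)..π / 2, Mfun (-v) r = ∫ v in -(π / 2)..π / 2, Mfun v r := by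
    simpa using integral_comp_neg (a := -(π / 2)) (b := π / 2) fun v => Mfun v r
  have hsum : ∫ v in -(π / 2)..π / 2, (Mfun v r + Mfun (-v) r) = π := by
    simp [Mfun_add_Mfun_neg hr]
  rw [integral_add (hM.intervalIntegrable _ _) (Continuous.intervalIntegrable (by fun_prop) _ _),
    hsym] at hsum
  linarith

lemma integral_radialIntegral_ge (hr : 0 ≤ r) :
    2 / ((r + 2) * c2 r) * ∫ θ in 0..π / 2, θ * cos θ ^ r ≤ ∫ φ in 0..π, radialIntegral r φ := by
  have hM := continuous_Mfun hr
  calc 2 / ((r + 2) * c2 r) * ∫ θ in 0..π / 2, θ * cos θ ^ r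
      = ∫ φ in 0..π, Mfun (φ / 2) r / (r + 2) := by
        rw [intervalIntegral.integral_div, integral_Mfun_half hr]
        field_simp
    _ ≤ ∫ φ in 0..π, radialIntegral r φ :=
        integral_mono_on_of_le_Ioo pi_pos.le (Continuous.intervalIntegrable (by fun_prop) _ _)
          (intervalIntegrable_radialIntegral hr) fun φ hφ => (radialIntegral_mem_Icc hr hφ).1

lemma integral_radialIntegral_le (hr : 0 ≤ r) :
    ∫ φ in 0..π, radialIntegral r φ ≤
      1 / c2 r * (∫ θ in 0..π / 2, θ * cos θ ^ r) + π / (2 * (r + 2)) := by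
  have hM := continuous_Mfun hr
  calc ∫ φ in 0..π, radialIntegral r φ
      ≤ ∫ φ in 0..π, (Mfun (φ / 2) r / 2 + Mfun (φ - π / 2) r / (r + 2)) :=
        integral_mono_on_of_le_Ioo pi_pos.le (intervalIntegrable_radialIntegral hr)
          (Continuous.intervalIntegrable (by fun_prop) _ _)
          fun φ hφ => (radialIntegral_mem_Icc hr hφ).2
    _ = _ := by
        rw [integral_add (Continuous.intervalIntegrable (by fun_prop) _ _)
          (Continuous.intervalIntegrable (by fun_prop) _ _), intervalIntegral.integral_div,
          intervalIntegral.integral_div, integral_Mfun_half hr, integral_Mfun_sub_pi_div_two hr]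
        field_simp

end AngularIntegral

lemma Econst_two_eq (r : ℝ) : Econst 2 r = 2 / π * ∫ φ in 0..π, radialIntegral r φ := by
  norm_num [Econst, radialIntegral, c2_eq_integral_sin_rpow]

/-- there is `c > 0` independent of `r` with
`c/(r+1)² ≤ E(2,r) ≤ 1/√(r+1)` for all `r > 0`. -/
theorem statement14 :
    ∃ c : ℝ, 0 < c ∧ ∀ r : ℝ, 0 < r →
      c / (r + 1) ^ 2 ≤ Econst 2 r ∧ Econst 2 r ≤ 1 / Real.sqrt (r + 1) := by
  refine ⟨2 / π ^ 2, by positivity, fun r hr => ?_⟩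
  have hJ₁ := integral_radialIntegral_ge hr.le
  have hJ₂ := integral_radialIntegral_le hr.le
  set T := ∫ θ in 0..π / 2, θ * cos θ ^ r
  have hT₁ : 1 / (r + 1) ≤ T := one_div_add_one_le_integral_mul_cos_rpow hr.le
  have hT₂ : T ≤ π / 2 / (r + 1) := integral_mul_cos_rpow_le hr.le
  have hT₀ : 0 ≤ T := le_trans (by positivity) hT₁
  have hc₁ : 2 / √(r + 1) ≤ c2 r := two_div_sqrt_le_c2 hr.le
  have hc₂ : c2 r ≤ π := c2_le_pi hr.le
  have hc := c2_pos hr.le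
  rw [Econst_two_eq]
  constructor
  · calc 2 / π ^ 2 / (r + 1) ^ 2 ≤ 2 / π * (2 / ((r + 2) * π) * (1 / (r + 1))) := by
          rw [div_div, div_le_iff₀ (by positivity)]
          field_simp
          nlinarith [pi_pos]
      _ ≤ 2 / π * (2 / ((r + 2) * c2 r) * T) := by gcongr
      _ ≤ _ := by gcongr
  · set s := √(r + 1)
    have hs : s ^ 2 = r + 1 := sq_sqrt (by linarith)
    have hs₁ : 1 ≤ s := one_le_sqrt.mpr (by linarith)
    calc 2 / π * ∫ φ in 0..π, radialIntegral r φ ≤ 2 / π * (1 / c2 r * T + π / (2 * (r + 2))) := by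
          gcongr
      _ ≤ 2 / π * (1 / (2 / s) * (π / 2 / (r + 1)) + π / (2 * (r + 2))) := by
          gcongr
      _ ≤ 1 / s := by
          rw [← hs]
          field_simp
          nlinarith
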